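/- arXiv:2107.09162 — 5 statements merged into one kernel-verified Lean document; each statement's English description precedes it below -/
import Mathlib

section
/- For a path graph P_n on n ≥ 1 vertices, the Laplacian energy satisfies LE(P_n) ≤ 2 + 4n/π, where LE(P_n) = Σ_{i=1}^n |μ_i − 2(n−1)/n| and the Laplacian eigenvalues of P_n are μ_j = 2 − 2cos(πj/n) = 4 sin²(πj/(2n)) for j = 0, 1, …, n−1. -/
open Real Finset

/-
With `x = π / (2n)` the summands are `|2/n - 2 cos (2jx)|`: the term `j = 0` is `2 - 2/n`, the
others are at most `2/n + 2 |cos (2jx)|`. Since `2 sin x cos (2jx) = sin ((2j+1)x) - sin ((2j-1)x)`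
and `sin` rises and then falls on `(0, π)`, the sum of the `|cos (2jx)|` telescopes to at most
`1 / sin x - 1`. Hence `LE(P_n) ≤ 2 - 4/n + 2 / sin x`, and `1 / sin x ≤ 1/x + x`, which follows
from `sin x ≥ x - x³/6`, finishes.
-/

theorem sum_range_abs_sub_eq_of_unimodal {α : Type*} [AddCommGroup α] [LinearOrder α]
    [IsOrderedAddMonoid α] {f : ℕ → α} {k m : ℕ} (hkm : k ≤ m)
    (hmono : ∀ i < k, f i ≤ f (i + 1))
    (hanti : ∀ i, k ≤ i → i < m → f (i + 1) ≤ f i) :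
    ∑ i ∈ range m, |f (i + 1) - f i| = 2 • f k - f 0 - f m := by
  have hrise : ∑ i ∈ range k, |f (i + 1) - f i| = f k - f 0 := by
    rw [← sum_range_sub]
    exact sum_congr rfl fun i hi => abs_of_nonneg (sub_nonneg.2 (hmono i (mem_range.1 hi)))
  have hfall : ∑ i ∈ Ico k m, |f (i + 1) - f i| = f k - f m := by
    rw [← neg_sub, ← sum_Ico_sub f hkm, ← sum_neg_distrib]
    refine sum_congr rfl fun i hi => ?_
    obtain ⟨hki, him⟩ := mem_Ico.1 hi
    exact abs_of_nonpos (sub_nonpos.2 (hanti i hki him))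
  rw [← sum_range_add_sum_Ico _ hkm, hrise, hfall, two_nsmul]
  abel

theorem sin_add_sub_sin_sub (x y : ℝ) : sin (y + x) - sin (y - x) = 2 * sin x * cos y := by
  rw [sin_add, sin_sub]
  ring

theorem cos_pi_mul_div_nonneg {j n : ℕ} (h : 2 * j ≤ n) : 0 ≤ cos (π * j / n) := by
  rcases n.eq_zero_or_pos with rfl | hn
  · simp
  have hnR : (0 : ℝ) < n := by exact_mod_cast hn
  refine cos_nonneg_of_mem_Icc ⟨by linarith [pi_pos, (by positivity : 0 ≤ π * j / n)], ?_⟩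
  rw [div_le_div_iff₀ hnR two_pos, mul_assoc]
  gcongr
  exact_mod_cast (by omega : j * 2 ≤ n)

theorem cos_pi_mul_div_nonpos {j n : ℕ} (hn : 0 < n) (h : n ≤ 2 * j) (hj : j ≤ n) :
    cos (π * j / n) ≤ 0 := by
  have hnR : (0 : ℝ) < n := by exact_mod_cast hn
  have hle_pi : π * j / n ≤ π := by
    rw [div_le_iff₀ hnR]
    gcongr
  refine cos_nonpos_of_pi_div_two_le_of_le ?_ (by linarith [pi_pos])
  rw [div_le_div_iff₀ two_pos hnR, mul_assoc]
  gcongr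
  exact_mod_cast (by omega : n ≤ j * 2)

theorem sum_range_abs_cos_pi_mul_div_le {n : ℕ} (hn : n ≠ 0) :
    ∑ j ∈ range (n - 1), |cos (π * (j + 1) / n)| ≤ (sin (π / (2 * n)))⁻¹ - 1 := by
  obtain ⟨x, hx⟩ : ∃ x, x = π / (2 * n) := ⟨_, rfl⟩
  rw [← hx]
  have hx0 : 0 < x := by rw [hx]; positivity
  have hsin0 : 0 < sin x := sin_pos_of_pos_of_lt_pi hx0
    (by rw [hx]; exact div_lt_self pi_pos (by norm_cast; omega))
  obtain ⟨f, hf⟩ : ∃ f : ℕ → ℝ, ∀ j, f j = sin ((2 * j + 1) * x) :=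
    ⟨_, fun _ => rfl⟩
  have hstep (j : ℕ) : f (j + 1) - f j = 2 * sin x * cos (π * (j + 1) / n) := by
    rw [← sin_add_sub_sin_sub, hf, hf, hx]
    push_cast
    congr 2 <;> ring
  have hmono : ∀ i < n / 2, f i ≤ f (i + 1) := fun i hi => by
    rw [← sub_nonneg, hstep]
    have := cos_pi_mul_div_nonneg (j := i + 1) (n := n) (by omega)
    push_cast at this
    positivity
  have hanti : ∀ i, n / 2 ≤ i → i < n - 1 → f (i + 1) ≤ f i := fun i hki hin => by
    rw [← sub_nonpos, hstep]
    have := cos_pi_mul_div_nonpos (j := i + 1) (n := n) (by omega) (by omega) (by omega)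
    push_cast at this
    exact mul_nonpos_of_nonneg_of_nonpos (by positivity) this
  have hf0 : f 0 = sin x := by simp [hf]
  have hflast : f (n - 1) = sin x := by
    rw [hf, ← sin_pi_sub x]
    congr 1
    rw [Nat.cast_pred (by omega), hx]
    field_simp
    ring
  have htelescope := sum_range_abs_sub_eq_of_unimodal (by omega) hmono hanti
  simp only [hstep, abs_mul, abs_of_pos (mul_pos two_pos hsin0), ← mul_sum, hf0, hflast,
    two_nsmul] at htelescope
  rw [le_sub_iff_add_le, ← one_div, le_div_iff₀ hsin0]
  nlinarith [sin_le_one ((2 * (n / 2 : ℕ) + 1) * x), hf (n / 2)]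

theorem inv_sin_le_inv_add_self {x : ℝ} (hx0 : 0 < x) (hx2 : x ≤ 2) :
    (sin x)⁻¹ ≤ x⁻¹ + x := by
  have hcube : 0 < x - x ^ 3 / 6 := by nlinarith [mul_pos hx0 (by nlinarith : 0 < 6 - x ^ 2)]
  have hsin := sin_gt_sub_cube hx0
  rw [inv_le_iff_one_le_mul₀ (hcube.trans hsin)]
  calc (1 : ℝ) ≤ (x⁻¹ + x) * (x - x ^ 3 / 6) := by
        field_simp
        nlinarith [mul_nonneg (sq_nonneg x) (by nlinarith : 0 ≤ 5 - x ^ 2)]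
    _ ≤ (x⁻¹ + x) * sin x := by gcongr

theorem four_mul_sin_sq_pi_mul_div_sub (n : ℕ) (j : ℝ) (hn : n ≠ 0) :
    4 * sin (π * j / (2 * n)) ^ 2 - 2 * (n - 1) / n = 2 / n - 2 * cos (π * j / n) := by
  rw [sin_sq_eq_half_sub]
  field_simp
  ring_nf

theorem sum_range_abs_two_div_sub_two_mul_cos_le {n : ℕ} (hn : n ≠ 0) :
    ∑ j ∈ range n, |2 / n - 2 * cos (π * j / n)| ≤
      2 - 2 * (2 / n) + 2 * (sin (π / (2 * n)))⁻¹ := by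
  rw [range_eq_Ico, sum_eq_sum_Ico_succ_bot (Nat.pos_of_ne_zero hn), sum_Ico_eq_sum_range]
  have hfirst : |2 / n - 2 * cos (π * (0 : ℕ) / n)| = 2 - 2 / n := by
    rw [Nat.cast_zero, mul_zero, zero_div, cos_zero, abs_sub_comm, abs_of_nonneg]
    · ring
    · have hn1 : (1 : ℝ) ≤ n := by exact_mod_cast Nat.one_le_iff_ne_zero.2 hn
      linarith [div_le_self zero_le_two hn1]
  have hrest (j : ℕ) :
      |2 / n - 2 * cos (π * (1 + j : ℕ) / n)| ≤ 2 / n + 2 * |cos (π * (j + 1) / n)| := by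
    calc _ ≤ |(2 : ℝ) / n| + |2 * cos (π * (j + 1) / n)| := by
          push_cast
          rw [add_comm (1 : ℝ)]
          exact abs_sub _ _
      _ = _ := by rw [abs_mul, abs_two, abs_of_pos (by positivity : (0 : ℝ) < 2 / n)]
  calc _ ≤ 2 - 2 / n + ∑ j ∈ range (n - 1), (2 / n + 2 * |cos (π * (j + 1) / n)|) := by
        rw [hfirst]
        gcongr with j
        exact hrest j
    _ = 2 - 2 / n + (n - 1) * (2 / n) + 2 * ∑ j ∈ range (n - 1), |cos (π * (j + 1) / n)| := by
        rw [sum_add_distrib, sum_const, card_range, ← mul_sum, nsmul_eq_mul,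
          Nat.cast_pred (Nat.pos_of_ne_zero hn)]
        ring
    _ ≤ 2 - 2 * (2 / n) + 2 * (sin (π / (2 * n)))⁻¹ := by
        have : (n - 1 : ℝ) * (2 / n) = 2 - 2 / n := by field_simp
        linarith [sum_range_abs_cos_pi_mul_div_le hn]

/-- For the path `P_n` with Laplacian eigenvalues `μ_j = 4 sin²(πj/(2n))`, `j = 0,…,n-1`,
the Laplacian energy satisfies `LE(P_n) ≤ 2 + 4n/π`. -/
theorem path_laplacian_energy_le (n : ℕ) (hn : 1 ≤ n) :
    ∑ j ∈ Finset.range n,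
        |4 * Real.sin (Real.pi * j / (2 * n)) ^ 2 - 2 * (n - 1) / n| ≤
      2 + 4 * n / Real.pi := by
  have hn0 : n ≠ 0 := by omega
  have hnR : (0 : ℝ) < n := by positivity
  have hx : π / (2 * n) ≤ 2 / n := by
    rw [div_le_div_iff₀ (by positivity) hnR]
    nlinarith [pi_lt_four]
  have hsin := inv_sin_le_inv_add_self (x := π / (2 * n)) (by positivity)
    (hx.trans (div_le_self zero_le_two (by exact_mod_cast hn)))
  rw [inv_div] at hsin
  simp_rw [four_mul_sin_sq_pi_mul_div_sub n _ hn0]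
  calc _ ≤ 2 - 2 * (2 / n) + 2 * (sin (π / (2 * n)))⁻¹ :=
        sum_range_abs_two_div_sub_two_mul_cos_le hn0
    _ ≤ 2 - 2 * (2 / n) + 2 * (2 * n / π + π / (2 * n)) := by gcongr
    _ ≤ 2 + 2 * (2 * n / π) := by linarith
    _ = 2 + 4 * n / π := by ring
end

section
/- Let T be a tree on n vertices (so m = n − 1 edges) with Laplacian eigenvalues μ_1 ≥ … ≥ μ_n = 0 and vertex degrees d_1 ≥ d_2 ≥ … ≥ d_n. For every k with 1 ≤ k ≤ n − 1, the Laplacian energy satisfies LE(T) ≥ 2(1 + Σ_{i=1}^k d_i − k·(2n−2)/n). -/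
/-!
Since `∑ μᵢ = tr L = 2n - 2`, the numbers `μᵢ - d̄` sum to zero, so `LE(T)` is at least twice the
sum of the `k` largest of them; it therefore suffices to prove Grone's inequality
`μ₁ + ⋯ + μₖ ≥ 1 + d(v₁) + ⋯ + d(vₖ)` for any `k` vertices `S` of a connected graph with
`0 < k < n`.

Let `M = L[S,S]`, which is positive definite, and `Q = L[Sᶜ,S]`. Ky Fan's maximum principle applied
to the column space of `L^{1/2}` restricted to `S` gives `μ₁ + ⋯ + μₖ ≥ tr (M⁻¹ (L²)[S,S])`, and
`(L²)[S,S] = M² + QᵀQ` turns this into `tr M + ∑_{w ∉ S} q_wᵀ M⁻¹ q_w`, where `q_w` is the row of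
`Q` at `w` and `tr M = ∑_{v ∈ S} d(v)`. If `m_w` is the number of neighbours of `w` in `S`, then
`∑ q_w = -m_w` and Cauchy–Schwarz gives `q_wᵀ M⁻¹ q_w ≥ m_w² / 𝟙ᵀ M 𝟙`, while `𝟙ᵀ M 𝟙 = ∑ m_w`
counts the edges leaving `S`. Since the `m_w` are integers, `∑ m_w² / ∑ m_w ≥ 1`.
-/

open Finset Polynomial Matrix
open scoped MatrixOrder

theorem sum_mul_le_sum_max_sub_add {ι : Type*} (s : Finset ι) (l c : ι → ℝ) (t : ℝ)
    (hc : ∀ i ∈ s, c i ∈ Set.Icc 0 1) :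
    ∑ i ∈ s, l i * c i ≤ ∑ i ∈ s, max (l i - t) 0 + t * ∑ i ∈ s, c i := by
  rw [mul_sum, ← sum_add_distrib]
  refine sum_le_sum fun i hi => ?_
  obtain ⟨hc₀, hc₁⟩ := hc i hi
  rcases le_total 0 (l i - t) with h | h
  · rw [max_eq_left h]; nlinarith
  · rw [max_eq_right h]; nlinarith

theorem Antitone.sum_max_sub_add_eq_sum_filter_lt {n k : ℕ} {μ : Fin n → ℝ} (hμ : Antitone μ)
    (hk : k < n) :
    ∑ i, max (μ i - μ ⟨k, hk⟩) 0 + μ ⟨k, hk⟩ * k =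
      ∑ i ∈ univ.filter (fun i : Fin n => (i : ℕ) < k), μ i := by
  have hcard : #(univ.filter fun i : Fin n => (i : ℕ) < k) = k := by
    rw [Fin.card_filter_val_lt]; omega
  have hlow : ∀ i ∈ univ.filter (fun i : Fin n => ¬ (i : ℕ) < k),
      max (μ i - μ ⟨k, hk⟩) 0 = 0 := by
    intro i hi
    simp only [mem_filter, mem_univ, true_and, not_lt] at hi
    exact max_eq_right (sub_nonpos.mpr (hμ (Fin.le_def.mpr hi)))
  have hhigh : ∀ i ∈ univ.filter (fun i : Fin n => (i : ℕ) < k),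
      max (μ i - μ ⟨k, hk⟩) 0 = μ i - μ ⟨k, hk⟩ := by
    intro i hi
    simp only [mem_filter, mem_univ, true_and] at hi
    exact max_eq_left (sub_nonneg.mpr (hμ (Fin.le_def.mpr hi.le)))
  rw [← sum_filter_add_sum_filter_not univ (fun i : Fin n => (i : ℕ) < k), sum_congr rfl hhigh,
    sum_eq_zero hlow, sum_sub_distrib, sum_const, hcard, nsmul_eq_mul]
  ring

theorem one_le_sum_of_sq_le_mul_sum {ι : Type*} (s : Finset ι) (m : ι → ℕ) (q : ι → ℝ)
    (hpos : 0 < ∑ i ∈ s, (m i : ℝ)) (h : ∀ i ∈ s, (m i : ℝ) ^ 2 ≤ q i * ∑ j ∈ s, (m j : ℝ)) :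
    1 ≤ ∑ i ∈ s, q i := by
  have hm : ∑ i ∈ s, (m i : ℝ) ≤ ∑ i ∈ s, (m i : ℝ) ^ 2 :=
    sum_le_sum fun i _ => by exact_mod_cast Nat.le_self_pow two_ne_zero (m i)
  have h' := hm.trans (sum_le_sum h)
  rw [← sum_mul] at h'
  exact (le_mul_iff_one_le_left hpos).mp h'

theorem two_mul_sum_le_sum_abs_of_sum_eq_zero {ι : Type*} [Fintype ι] [DecidableEq ι]
    {f : ι → ℝ} (hf : ∑ i, f i = 0) (s : Finset ι) : 2 * ∑ i ∈ s, f i ≤ ∑ i, |f i| := by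
  rw [← sum_add_sum_compl s] at hf ⊢
  have h₁ : ∑ i ∈ s, f i ≤ ∑ i ∈ s, |f i| := sum_le_sum fun i _ => le_abs_self (f i)
  have h₂ : ∑ i ∈ sᶜ, -f i ≤ ∑ i ∈ sᶜ, |f i| := sum_le_sum fun i _ => neg_le_abs (f i)
  rw [sum_neg_distrib] at h₂
  linarith

namespace Matrix

theorem submatrix_mul_eq_add_compl {l m o κ ι α : Type*} [Fintype m] [DecidableEq m]
    [NonUnitalNonAssocSemiring α] (A : Matrix l m α) (B : Matrix m o α) (f : κ → l) (g : ι → o)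
    (s : Finset m) :
    (A * B).submatrix f g =
      (A.submatrix f Subtype.val : Matrix κ s α) * (B.submatrix Subtype.val g : Matrix s ι α) +
      (A.submatrix f Subtype.val : Matrix κ ↥sᶜ α) *
        (B.submatrix Subtype.val g : Matrix ↥sᶜ ι α) := by
  ext i j
  simp only [submatrix_apply, add_apply, mul_apply]
  rw [sum_coe_sort s (fun k => A (f i) k * B k (g j)),
    sum_coe_sort sᶜ (fun k => A (f i) k * B k (g j)), sum_add_sum_compl]

theorem trace_mul_mul_conjTranspose {m κ : Type*} [Fintype m] [Fintype κ] (Q : Matrix m κ ℝ)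
    (N : Matrix κ κ ℝ) : (Q * N * Qᴴ).trace = ∑ w, Q w ⬝ᵥ N *ᵥ Q w := by
  simp only [trace, diag, mul_apply, conjTranspose_apply, star_trivial, dotProduct, mulVec,
    sum_mul, mul_sum]
  refine sum_congr rfl fun w _ => ?_
  rw [sum_comm]
  simp only [mul_comm, mul_left_comm]

theorem PosDef.sq_dotProduct_le {κ : Type*} [Fintype κ] [DecidableEq κ] {M : Matrix κ κ ℝ}
    (hM : M.PosDef) (q u : κ → ℝ) : (q ⬝ᵥ u) ^ 2 ≤ (q ⬝ᵥ M⁻¹ *ᵥ q) * (u ⬝ᵥ M *ᵥ u) := by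
  obtain ⟨B, hB⟩ := CStarAlgebra.nonneg_iff_eq_star_mul_self.mp hM.inv.posSemidef.nonneg
  have hform : ∀ x y, x ⬝ᵥ M⁻¹ *ᵥ y = B *ᵥ x ⬝ᵥ B *ᵥ y := by
    intro x y
    rw [hB, star_eq_conjTranspose, ← mulVec_mulVec, dotProduct_mulVec,
      conjTranspose_eq_transpose_of_trivial, vecMul_transpose]
  have hMM : M⁻¹ * M = 1 := nonsing_inv_mul M ((isUnit_iff_isUnit_det M).mp hM.isUnit)
  have hq : q ⬝ᵥ u = q ⬝ᵥ M⁻¹ *ᵥ (M *ᵥ u) := by rw [mulVec_mulVec, hMM, one_mulVec]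
  have hu : u ⬝ᵥ M *ᵥ u = M *ᵥ u ⬝ᵥ M⁻¹ *ᵥ (M *ᵥ u) := by
    rw [mulVec_mulVec, hMM, one_mulVec, dotProduct_comm]
  rw [hq, hu, hform, hform, hform]
  simpa only [dotProduct, sq] using sum_mul_sq_le_sq_mul_sq univ (B *ᵥ q) (B *ᵥ (M *ᵥ u))

namespace IsHermitian

section

variable {ι : Type*} [Fintype ι] [DecidableEq ι] {A : Matrix ι ι ℝ} {μ : ι → ℝ}

theorem sum_comp_eigenvalues (hA : A.IsHermitian) (hchar : A.charpoly = ∏ i, (X - C (μ i)))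
    (f : ℝ → ℝ) : ∑ i, f (hA.eigenvalues i) = ∑ i, f (μ i) := by
  have hroots : univ.val.map hA.eigenvalues = univ.val.map μ := by
    have h := hA.roots_charpoly_eq_eigenvalues
    rw [hchar, roots_prod _ _ (prod_ne_zero_iff.mpr fun i _ => X_sub_C_ne_zero _)] at h
    simpa using h.symm
  simpa [Function.comp_def] using congrArg (fun m => (m.map f).sum) hroots

theorem trace_eq_sum_of_charpoly (hA : A.IsHermitian)
    (hchar : A.charpoly = ∏ i, (X - C (μ i))) : A.trace = ∑ i, μ i := by
  simpa [hA.trace_eq_sum_eigenvalues] using hA.sum_comp_eigenvalues hchar id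

theorem diag_mem_Icc_of_mul_self_eq {P : Matrix ι ι ℝ} (hP : P.IsHermitian) (hPP : P * P = P)
    (i : ι) : P i i ∈ Set.Icc 0 1 := by
  have h₀ : P = Pᴴ * P := by rw [hP.eq, hPP]
  have h₁ : 1 - P = (1 - P)ᴴ * (1 - P) := by
    rw [conjTranspose_sub, conjTranspose_one, hP.eq, sub_mul, mul_sub, mul_sub, hPP]
    simp
  constructor
  · rw [h₀]
    exact (posSemidef_conjTranspose_mul_self P).diag_nonneg
  · have h := (posSemidef_conjTranspose_mul_self (1 - P)).diag_nonneg (i := i)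
    rw [← h₁] at h
    simpa using h

end

/-- Ky Fan's maximum principle. -/
theorem trace_conjTranspose_mul_mul_le {n : ℕ} {A : Matrix (Fin n) (Fin n) ℝ}
    (hA : A.IsHermitian) {μ : Fin n → ℝ} (hμ : Antitone μ)
    (hchar : A.charpoly = ∏ i, (X - C (μ i))) {κ : Type*} [Fintype κ] [DecidableEq κ]
    {X : Matrix (Fin n) κ ℝ} (hX : Xᴴ * X = 1) (hk : Fintype.card κ < n) :
    (Xᴴ * A * X).trace ≤ ∑ i ∈ univ.filter (fun i : Fin n => (i : ℕ) < Fintype.card κ), μ i := by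
  set U : Matrix (Fin n) (Fin n) ℝ := (hA.eigenvectorUnitary : Matrix (Fin n) (Fin n) ℝ)
  have hUU : U * Uᴴ = 1 := mem_unitaryGroup_iff.mp hA.eigenvectorUnitary.2
  have hA' : A = U * diagonal hA.eigenvalues * Uᴴ := by
    conv_lhs => rw [hA.spectral_theorem, Unitary.conjStarAlgAut_apply]
    simp only [RCLike.ofReal_real_eq_id, Function.id_comp, star_eq_conjTranspose, U]
  set Y := Uᴴ * X
  set P := Y * Yᴴ
  have hYY : Yᴴ * Y = 1 := by
    simp only [Y, conjTranspose_mul, conjTranspose_conjTranspose, Matrix.mul_assoc]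
    rw [← Matrix.mul_assoc U, hUU, Matrix.one_mul, hX]
  have hPP : P * P = P := by
    simp only [P, Matrix.mul_assoc]
    rw [← Matrix.mul_assoc Yᴴ, hYY, Matrix.one_mul]
  -- The projection `P` weights the eigenvalues by its diagonal, which lies in `[0, 1]` and sums
  -- to `k`.
  have htr : (Xᴴ * A * X).trace = ∑ j, hA.eigenvalues j * P j j := by
    have h : Xᴴ * A * X = Yᴴ * diagonal hA.eigenvalues * Y := by
      simp only [Y, hA', conjTranspose_mul, conjTranspose_conjTranspose, Matrix.mul_assoc]
    rw [h, trace_mul_comm, ← Matrix.mul_assoc]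
    simp only [trace, diag, mul_diagonal, mul_comm]
    rfl
  have htrP : ∑ j, P j j = Fintype.card κ := by
    change P.trace = _
    rw [trace_mul_comm, hYY, trace_one]
  set t := μ ⟨Fintype.card κ, hk⟩
  calc (Xᴴ * A * X).trace = ∑ j, hA.eigenvalues j * P j j := htr
    _ ≤ ∑ j, max (hA.eigenvalues j - t) 0 + t * ∑ j, P j j :=
      sum_mul_le_sum_max_sub_add _ _ _ _ fun j _ =>
        (isHermitian_mul_conjTranspose_self Y).diag_mem_Icc_of_mul_self_eq hPP j
    _ = _ := by
      rw [htrP, hA.sum_comp_eigenvalues hchar (fun x => max (x - t) 0)]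
      exact hμ.sum_max_sub_add_eq_sum_filter_lt hk

end IsHermitian

/-- Ky Fan's principle for the column space of `A^{1/2}` restricted to the indices `f`, i.e. for
`X = (A^{1/2})[·,f] (A[f,f])^{-1/2}`. -/
theorem PosSemidef.trace_inv_submatrix_mul_le {n : ℕ} {A : Matrix (Fin n) (Fin n) ℝ}
    (hA : A.PosSemidef) {μ : Fin n → ℝ} (hμ : Antitone μ)
    (hchar : A.charpoly = ∏ i, (X - C (μ i))) {κ : Type*} [Fintype κ] [DecidableEq κ]
    {f : κ → Fin n} (hf : (A.submatrix f f).PosDef) (hk : Fintype.card κ < n) :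
    ((A.submatrix f f)⁻¹ * (A * A).submatrix f f).trace ≤
      ∑ i ∈ univ.filter (fun i : Fin n => (i : ℕ) < Fintype.card κ), μ i := by
  set M := A.submatrix f f
  set S := CFC.sqrt A
  set T := CFC.sqrt M
  have hSS : S * S = A := CFC.sqrt_mul_sqrt_self A hA.nonneg
  have hSH : Sᴴ = S := (CFC.sqrt_nonneg A).posSemidef.1
  have hTT : T * T = M := CFC.sqrt_mul_sqrt_self M hf.posSemidef.nonneg
  have hTdet : IsUnit T.det :=
    (isUnit_iff_isUnit_det T).mp (isUnit_of_mul_isUnit_left (hTT ▸ hf.isUnit))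
  have hTinvH : T⁻¹ᴴ = T⁻¹ := by
    rw [conjTranspose_nonsing_inv, (CFC.sqrt_nonneg M).posSemidef.1]
  have hcompress : ∀ B : Matrix (Fin n) (Fin n) ℝ,
      (S.submatrix id f * T⁻¹)ᴴ * B * (S.submatrix id f * T⁻¹) =
        T⁻¹ * (S * B * S).submatrix f f * T⁻¹ := by
    intro B
    rw [submatrix_mul _ _ f id f Function.bijective_id,
      submatrix_mul _ _ f id id Function.bijective_id]
    simp only [conjTranspose_mul, hTinvH, conjTranspose_submatrix, hSH, submatrix_id_id,
      Matrix.mul_assoc]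
  have hSAS : S * A * S = A * A := by
    rw [← hSS]
    simp only [Matrix.mul_assoc]
  have hX : (S.submatrix id f * T⁻¹)ᴴ * (S.submatrix id f * T⁻¹) = 1 := by
    calc _ = T⁻¹ * (T * T) * T⁻¹ := by
          rw [← Matrix.mul_one (S.submatrix id f * T⁻¹)ᴴ, hcompress, Matrix.mul_one, hSS, hTT]
      _ = 1 := by
        rw [← Matrix.mul_assoc, nonsing_inv_mul T hTdet, Matrix.one_mul, mul_nonsing_inv T hTdet]
  calc (M⁻¹ * (A * A).submatrix f f).trace
      = ((S.submatrix id f * T⁻¹)ᴴ * A * (S.submatrix id f * T⁻¹)).trace := by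
        rw [hcompress, hSAS, trace_mul_cycle, ← Matrix.mul_inv_rev, hTT]
    _ ≤ _ := hA.isHermitian.trace_conjTranspose_mul_mul_le hμ hchar hX hk

end Matrix

namespace SimpleGraph

variable {V : Type*} [Fintype V] [DecidableEq V] {G : SimpleGraph V} [DecidableRel G.Adj]

theorem lapMatrix_apply_self (v : V) : G.lapMatrix ℝ v v = G.degree v := by
  simp [lapMatrix, degMatrix]

theorem lapMatrix_apply_of_ne {v w : V} (h : v ≠ w) :
    G.lapMatrix ℝ v w = -if G.Adj v w then 1 else 0 := by
  simp [lapMatrix, degMatrix, h]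

theorem trace_lapMatrix : (G.lapMatrix ℝ).trace = 2 * #G.edgeFinset := by
  simp only [trace, Matrix.diag, lapMatrix_apply_self]
  exact_mod_cast sum_degrees_eq_twice_card_edges G

theorem sum_lapMatrix_apply_of_notMem {s : Finset V} {w : V} (hw : w ∉ s) :
    ∑ v ∈ s, G.lapMatrix ℝ w v = -#{v ∈ s | G.Adj w v} := by
  rw [sum_congr rfl fun v hv => lapMatrix_apply_of_ne (ne_of_mem_of_not_mem hv hw).symm,
    sum_neg_distrib, sum_boole]

theorem sum_sum_lapMatrix_eq_sum_card (s : Finset V) :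
    ∑ v ∈ s, ∑ u ∈ s, G.lapMatrix ℝ v u = ∑ w ∈ sᶜ, (#{v ∈ s | G.Adj w v} : ℝ) := by
  have hrow : ∀ v, ∑ u, G.lapMatrix ℝ v u = 0 := fun v => by
    simpa [mulVec, dotProduct] using congrFun (lapMatrix_mulVec_const_eq_zero (R := ℝ) G) v
  calc ∑ v ∈ s, ∑ u ∈ s, G.lapMatrix ℝ v u = ∑ v ∈ s, -∑ w ∈ sᶜ, G.lapMatrix ℝ w v := by
        refine sum_congr rfl fun v _ => ?_
        rw [eq_neg_iff_add_eq_zero, ← hrow v, ← sum_add_sum_compl s]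
        simp only [(isSymm_lapMatrix ℝ G).apply]
    _ = ∑ w ∈ sᶜ, (#{v ∈ s | G.Adj w v} : ℝ) := by
        rw [sum_neg_distrib, sum_comm, ← sum_neg_distrib]
        exact sum_congr rfl fun w hw => by
          rw [sum_lapMatrix_apply_of_notMem (mem_compl.mp hw), neg_neg]

theorem Connected.posDef_lapMatrix_submatrix (hG : G.Connected) {s : Finset V} (hs : s ≠ univ) :
    ((G.lapMatrix ℝ).submatrix Subtype.val Subtype.val : Matrix s s ℝ).PosDef := by
  refine .of_dotProduct_mulVec_pos ((isHermitian_lapMatrix ℝ G).submatrix _) fun x hx => ?_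
  obtain ⟨w, hw⟩ : ∃ w, w ∉ s := by simpa [eq_univ_iff_forall] using hs
  set y : V → ℝ := fun v => if h : v ∈ s then x ⟨v, h⟩ else 0
  have hsum : ∀ g : V → ℝ, ∑ v, g v * y v = ∑ i : s, g i * x i := by
    intro g
    rw [← sum_subset (subset_univ s) fun v _ hv => by simp [y, hv], ← sum_coe_sort s]
    simp [y]
  have hxy : x ⬝ᵥ (G.lapMatrix ℝ).submatrix Subtype.val Subtype.val *ᵥ x =
      y ⬝ᵥ G.lapMatrix ℝ *ᵥ y := by
    rw [dotProduct_comm y]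
    simp only [dotProduct, mulVec, hsum, submatrix_apply]
    exact sum_congr rfl fun _ _ => mul_comm _ _
  rw [star_trivial, hxy]
  refine ((posSemidef_lapMatrix ℝ G).dotProduct_mulVec_nonneg y).lt_of_ne' fun h₀ => hx ?_
  have hconst := (lapMatrix_mulVec_eq_zero_iff_forall_reachable G).mp
    (((posSemidef_lapMatrix ℝ G).dotProduct_mulVec_zero_iff y).mp (by simpa using h₀))
  ext ⟨v, hv⟩
  simpa [y, hv, hw] using hconst v w (hG.preconnected v w)

theorem Connected.one_le_sum_dotProduct_inv_mulVec (hG : G.Connected) {s : Finset V}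
    (hs : s.Nonempty) (hsu : s ≠ univ) :
    1 ≤ ∑ w : ↥sᶜ, (fun v : s => G.lapMatrix ℝ w v) ⬝ᵥ
      ((G.lapMatrix ℝ).submatrix Subtype.val Subtype.val : Matrix s s ℝ)⁻¹ *ᵥ
        (fun v : s => G.lapMatrix ℝ w v) := by
  set L := G.lapMatrix ℝ
  set M : Matrix s s ℝ := L.submatrix Subtype.val Subtype.val
  have hM : M.PosDef := hG.posDef_lapMatrix_submatrix hsu
  have hrow : ∀ w : ↥sᶜ, (fun v : s => L w v) ⬝ᵥ 1 = -#{v ∈ s | G.Adj w v} := fun w => by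
    rw [dotProduct_one, ← sum_lapMatrix_apply_of_notMem (mem_compl.mp w.2)]
    exact sum_coe_sort s (fun v => L w v)
  have htot : (1 : s → ℝ) ⬝ᵥ M *ᵥ 1 = ∑ w : ↥sᶜ, (#{v ∈ s | G.Adj w v} : ℝ) := by
    rw [sum_coe_sort sᶜ (fun w => (#{v ∈ s | G.Adj w v} : ℝ)),
      ← sum_sum_lapMatrix_eq_sum_card, ← sum_coe_sort s]
    simp only [mulVec, dotProduct, Pi.one_apply, one_mul, mul_one, M, submatrix_apply]
    exact sum_congr rfl fun v _ => sum_coe_sort s (fun u => L v u)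
  have hpos : 0 < (1 : s → ℝ) ⬝ᵥ M *ᵥ 1 := by
    have : Nonempty s := hs.coe_sort
    simpa using hM.dotProduct_mulVec_pos (x := 1) one_ne_zero
  rw [htot] at hpos
  refine one_le_sum_of_sq_le_mul_sum univ (fun w : ↥sᶜ => #{v ∈ s | G.Adj w v}) _ hpos
    fun w _ => ?_
  have h := hM.sq_dotProduct_le (fun v : s => L w v) 1
  rwa [hrow, htot, neg_sq] at h

/-- Grone's inequality. -/
theorem Connected.one_add_sum_degree_le {n : ℕ} {G : SimpleGraph (Fin n)} [DecidableRel G.Adj]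
    (hG : G.Connected) {μ : Fin n → ℝ} (hμ : Antitone μ)
    (hchar : (G.lapMatrix ℝ).charpoly = ∏ i, (X - C (μ i))) {s : Finset (Fin n)}
    (hs : s.Nonempty) (hsu : s ≠ univ) :
    1 + ∑ v ∈ s, (G.degree v : ℝ) ≤ ∑ i ∈ univ.filter (fun i : Fin n => (i : ℕ) < #s), μ i := by
  set L := G.lapMatrix ℝ
  set M : Matrix s s ℝ := L.submatrix Subtype.val Subtype.val
  set Q : Matrix ↥sᶜ s ℝ := L.submatrix Subtype.val Subtype.val
  have hM : M.PosDef := hG.posDef_lapMatrix_submatrix hsu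
  have hMinv : M⁻¹ * M = 1 := nonsing_inv_mul M ((isUnit_iff_isUnit_det M).mp hM.isUnit)
  have hblock : (L * L).submatrix Subtype.val Subtype.val = M * M + Qᴴ * Q := by
    rw [Matrix.submatrix_mul_eq_add_compl L L _ _ s, conjTranspose_submatrix,
      (isHermitian_lapMatrix ℝ G).eq]
  have htrM : M.trace = ∑ v ∈ s, (G.degree v : ℝ) := by
    simp only [trace, Matrix.diag, M, submatrix_apply, L, lapMatrix_apply_self]
    exact sum_coe_sort s (fun v => (G.degree v : ℝ))
  have hcross : 1 ≤ ∑ w, Q w ⬝ᵥ M⁻¹ *ᵥ Q w := hG.one_le_sum_dotProduct_inv_mulVec hs hsu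
  have hk : Fintype.card s < n := by simpa using (card_lt_iff_ne_univ s).mpr hsu
  calc 1 + ∑ v ∈ s, (G.degree v : ℝ) ≤ M.trace + (Q * M⁻¹ * Qᴴ).trace := by
        rw [htrM, trace_mul_mul_conjTranspose]
        linarith
    _ = (M⁻¹ * (L * L).submatrix Subtype.val Subtype.val).trace := by
        rw [hblock, Matrix.mul_add, trace_add, ← Matrix.mul_assoc, hMinv, Matrix.one_mul,
          ← Matrix.mul_assoc, trace_mul_cycle M⁻¹]
    _ ≤ _ := by
        simpa using (posSemidef_lapMatrix ℝ G).trace_inv_submatrix_mul_le hμ hchar hM hk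

end SimpleGraph

theorem tree_laplacian_energy_lower_general (n : ℕ)
    (G : SimpleGraph (Fin n)) [DecidableRel G.Adj] (hT : G.IsTree)
    (μ : Fin n → ℝ) (hmono : Antitone μ)
    (hchar : (G.lapMatrix ℝ).charpoly = ∏ i, (X - C (μ i)))
    (d : Fin n → ℕ)
    (hperm : ∃ e : Equiv.Perm (Fin n), ∀ i, d i = G.degree (e i)) :
    ∀ k, 1 ≤ k → k ≤ n - 1 →
      ∑ i, |μ i - (2 * (n : ℝ) - 2) / n| ≥
        2 * (1 + (∑ i ∈ Finset.univ.filter fun i : Fin n => (i : ℕ) < k, (d i : ℝ)) -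
          k * ((2 * (n : ℝ) - 2) / n)) := by
  intro k hk1 hkn
  obtain ⟨e, he⟩ := hperm
  set I := univ.filter fun i : Fin n => (i : ℕ) < k
  set s := I.map e.toEmbedding
  have hcardI : #I = k := by rw [Fin.card_filter_val_lt]; omega
  have hcard : #s = k := by rw [card_map, hcardI]
  have hs : s.Nonempty := by rw [← card_pos, hcard]; omega
  have hsu : s ≠ univ := by rw [← card_lt_iff_ne_univ, hcard, Fintype.card_fin]; omega
  have hgrone := hT.connected.one_add_sum_degree_le hmono hchar hs hsu
  rw [hcard, show ∑ v ∈ s, (G.degree v : ℝ) = ∑ i ∈ I, (d i : ℝ) by simp [s, he]] at hgrone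
  have htrace : ∑ i, μ i = 2 * n - 2 := by
    rw [← (G.isHermitian_lapMatrix ℝ).trace_eq_sum_of_charpoly hchar, G.trace_lapMatrix]
    have hedges : (#G.edgeFinset : ℝ) + 1 = n := by
      exact_mod_cast Fintype.card_fin n ▸ hT.card_edgeFinset
    linarith
  have hsum : ∑ i, (μ i - (2 * (n : ℝ) - 2) / n) = 0 := by
    have hn : (n : ℝ) ≠ 0 := by norm_cast; omega
    rw [sum_sub_distrib, htrace, sum_const, card_univ, Fintype.card_fin, nsmul_eq_mul]
    field_simp
    ring
  have henergy := two_mul_sum_le_sum_abs_of_sum_eq_zero hsum I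
  rw [sum_sub_distrib, sum_const, hcardI, nsmul_eq_mul] at henergy
  linarith

theorem tree_laplacian_energy_lower (n : ℕ) (hn : 1 ≤ n)
    (G : SimpleGraph (Fin n)) [DecidableRel G.Adj] (hT : G.IsTree)
    (μ : Fin n → ℝ) (hmono : Antitone μ)
    (hchar : (G.lapMatrix ℝ).charpoly = ∏ i, (X - C (μ i)))
    (d : Fin n → ℕ) (hd : Antitone d)
    (hperm : ∃ e : Equiv.Perm (Fin n), ∀ i, d i = G.degree (e i)) :
    ∀ k, 1 ≤ k → k ≤ n - 1 →
      ∑ i, |μ i - (2 * (n : ℝ) - 2) / n| ≥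
        2 * (1 + (∑ i ∈ Finset.univ.filter fun i : Fin n => (i : ℕ) < k, (d i : ℝ)) -
          k * ((2 * (n : ℝ) - 2) / n)) :=
  tree_laplacian_energy_lower_general n G hT μ hmono hchar d hperm
end

section
/- Let T be a tree on n ≥ 4 vertices with exactly s internal (non-pendent) vertices, where 1 ≤ s ≤ n − 2. Assuming the Grone inequality Σ_{i=1}^s μ_i ≥ 1 + Σ_{i=1}^s d_i, one has LE(T) ≥ 2n + 2s − 2 − 2s·(2n−2)/n; moreover if ((π−2)/π)·n ≥ s + 2 − 2s/n, then LE(T) ≥ 2 + 4n/π. -/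
/-!
The Laplacian eigenvalues of a tree sum to its degree sum `2n - 2 = n·d̄`, so the deviations
`μ i - d̄` sum to zero and their absolute values add up to at least twice the sum of any `s` of
them. For the first `s` of them Grone's bound reduces the claim to a degree count: pendent vertices
have degree one, so the `s` internal vertices, which fill the first `s` places of the sorted degree
sequence, have degrees summing to `n + s - 2`. The second bound is the first one rearranged.
-/

open Finset Polynomial Real

theorem Matrix.trace_eq_sum_of_charpoly_eq_prod {ι R : Type*} [Fintype ι] [DecidableEq ι]
    [CommRing R] {A : Matrix ι ι R} {μ : ι → R} (h : A.charpoly = ∏ i, (X - C (μ i))) :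
    A.trace = ∑ i, μ i := by
  rcases isEmpty_or_nonempty ι with _ | _
  · simp
  rw [trace_eq_neg_charpoly_coeff, h, ← card_univ,
    prod_X_sub_C_coeff_card_pred univ μ univ_nonempty.card_pos, neg_neg]

theorem two_mul_sum_sub_le_sum_abs_sub {ι α : Type*} [Fintype ι] [DecidableEq ι] [Field α]
    [LinearOrder α] [IsStrictOrderedRing α] {f : ι → α} {c : α}
    (hf : ∑ i, f i = Fintype.card ι * c) (S : Finset ι) :
    2 * (∑ i ∈ S, f i - #S * c) ≤ ∑ i, |f i - c| := by
  have hS : ∑ i ∈ S, (f i - c) = ∑ i ∈ S, f i - #S * c := by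
    rw [sum_sub_distrib, sum_const, nsmul_eq_mul]
  have hzero : ∑ i, (f i - c) = 0 := by
    rw [sum_sub_distrib, hf, sum_const, card_univ, nsmul_eq_mul, sub_self]
  have hle : ∑ i ∈ S, (f i - c) ≤ ∑ i ∈ S, |f i - c| :=
    sum_le_sum fun i _ => le_abs_self _
  have hge : -∑ i ∈ Sᶜ, (f i - c) ≤ ∑ i ∈ Sᶜ, |f i - c| := by
    rw [← sum_neg_distrib]
    exact sum_le_sum fun i _ => neg_le_abs _
  linarith [sum_add_sum_compl S fun i => f i - c, sum_add_sum_compl S fun i => |f i - c|]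

theorem Fin.lt_card_filter_iff_of_antitone {n : ℕ} {p : Fin n → Prop} [DecidablePred p]
    (hp : Antitone p) (i : Fin n) : (i : ℕ) < #{j | p j} ↔ p i := by
  constructor
  · intro hi
    by_contra hpi
    have hsub : ({j | p j} : Finset (Fin n)) ⊆ Iio i := fun j hj => by
      simp only [mem_filter, mem_univ, true_and] at hj
      exact mem_Iio.2 (lt_of_not_ge fun hij => hpi (hp hij hj))
    have := card_le_card hsub
    rw [Fin.card_Iio] at this
    omega
  · intro hpi
    have hsub : Iic i ⊆ ({j | p j} : Finset (Fin n)) := fun j hj => by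
      simpa using hp (mem_Iic.1 hj) hpi
    have := card_le_card hsub
    rw [Fin.card_Iic] at this
    omega

theorem sum_filter_two_le_add_two {ι : Type*} [Fintype ι] {d : ι → ℕ} (hd : ∀ i, 1 ≤ d i)
    (hsum : ∑ i, d i + 2 = 2 * Fintype.card ι) :
    ∑ i ∈ {i | 2 ≤ d i}, d i + 2 = Fintype.card ι + #{i | 2 ≤ d i} := by
  have hleaves : ∑ i ∈ {i | ¬2 ≤ d i}, d i = #{i | ¬2 ≤ d i} :=
    card_eq_sum_ones _ ▸ sum_congr rfl fun i hi => by
      simp only [mem_filter, mem_univ, true_and, not_le] at hi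
      have := hd i
      omega
  have := sum_filter_add_sum_filter_not univ (fun i => 2 ≤ d i) d
  have := card_filter_add_card_filter_not (s := univ) fun i => 2 ≤ d i
  rw [card_univ] at this
  omega

namespace SimpleGraph

variable {V : Type*} [Fintype V] {G : SimpleGraph V} [DecidableRel G.Adj]

theorem IsTree.sum_degrees_add_two [DecidableEq V] (hG : G.IsTree) :
    ∑ v, G.degree v + 2 = 2 * Fintype.card V := by
  have := hG.card_edgeFinset
  rw [G.sum_degrees_eq_twice_card_edges]
  omega

theorem trace_lapMatrix_s5 (R : Type*) [CommRing R] [DecidableEq V] :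
    (G.lapMatrix R).trace = ∑ v, (G.degree v : R) := by
  simp [lapMatrix, degMatrix, Matrix.trace_sub]

theorem IsTree.trace_lapMatrix_add_two (R : Type*) [CommRing R] [DecidableEq V]
    (hG : G.IsTree) : (G.lapMatrix R).trace + 2 = 2 * Fintype.card V := by
  rw [trace_lapMatrix_s5]
  simpa using congrArg (Nat.cast : ℕ → R) hG.sum_degrees_add_two

end SimpleGraph

theorem SimpleGraph.IsTree.sum_sorted_degrees_add_two {n : ℕ} [Nontrivial (Fin n)]
    {G : SimpleGraph (Fin n)} [DecidableRel G.Adj] (hG : G.IsTree) {d : Fin n → ℕ}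
    (hd : Antitone d) {e : Equiv.Perm (Fin n)} (he : ∀ i, d i = G.degree (e i)) :
    ∑ i ∈ {i : Fin n | (i : ℕ) < #{v | 2 ≤ G.degree v}}, d i + 2 =
      n + #{v | 2 ≤ G.degree v} := by
  have hcard : #{v | 2 ≤ G.degree v} = #{i | 2 ≤ d i} := by
    simp_rw [card_filter, he]
    exact (Equiv.sum_comp e fun v => if 2 ≤ G.degree v then 1 else 0).symm
  have hsum : ∑ i, d i + 2 = 2 * n := by
    simpa [he, Equiv.sum_comp e fun v => G.degree v] using hG.sum_degrees_add_two
  have hpos : ∀ i, 1 ≤ d i := fun i =>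
    he i ▸ hG.connected.preconnected.degree_pos_of_nontrivial _
  have hinit : ∀ i : Fin n, (i : ℕ) < #{i | 2 ≤ d i} ↔ 2 ≤ d i :=
    Fin.lt_card_filter_iff_of_antitone fun i j hij h => h.trans (hd hij)
  rw [hcard, filter_congr fun i _ => hinit i]
  simpa using sum_filter_two_le_add_two hpos (by simpa using hsum)

theorem tree_energy_via_internal_vertices_general (n : ℕ) (hn : 4 ≤ n)
    (G : SimpleGraph (Fin n)) [DecidableRel G.Adj] (hT : G.IsTree)
    (μ : Fin n → ℝ)
    (hchar : (G.lapMatrix ℝ).charpoly = ∏ i, (X - C (μ i)))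
    (d : Fin n → ℕ) (hdmono : Antitone d)
    (hperm : ∃ e : Equiv.Perm (Fin n), ∀ i, d i = G.degree (e i))
    (s : ℕ) (hs : s = (Finset.univ.filter fun v : Fin n => 2 ≤ G.degree v).card)
    (hGrone : (∑ i ∈ Finset.univ.filter fun i : Fin n => (i : ℕ) < s, μ i) ≥
      1 + ∑ i ∈ Finset.univ.filter fun i : Fin n => (i : ℕ) < s, (d i : ℝ)) :
    ∑ i, |μ i - (2 * (n : ℝ) - 2) / n| ≥
        2 * n + 2 * s - 2 - 2 * s * ((2 * (n : ℝ) - 2) / n) ∧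
      (((Real.pi - 2) / Real.pi) * n ≥ s + 2 - 2 * s / n →
        ∑ i, |μ i - (2 * (n : ℝ) - 2) / n| ≥ 2 + 4 * n / Real.pi) := by
  obtain ⟨e, he⟩ := hperm
  have : Nontrivial (Fin n) := Fin.nontrivial_iff_two_le.2 (by omega)
  have hn0 : (n : ℝ) ≠ 0 := by positivity
  set S : Finset (Fin n) := {i | (i : ℕ) < s}
  have hScard : #S = s := by
    have hsn : s ≤ n := hs ▸ (card_le_univ _).trans_eq (Fintype.card_fin n)
    rw [Fin.card_filter_val_lt, min_eq_right hsn]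
  have hdegS : ∑ i ∈ S, (d i : ℝ) = n + s - 2 := by
    have h := congrArg (Nat.cast : ℕ → ℝ) (hT.sum_sorted_degrees_add_two hdmono he)
    push_cast [← hs] at h
    linarith
  have htrace : ∑ i, μ i = Fintype.card (Fin n) * ((2 * n - 2) / n) := by
    have h := hT.trace_lapMatrix_add_two ℝ
    rw [Matrix.trace_eq_sum_of_charpoly_eq_prod hchar, Fintype.card_fin] at h
    rw [Fintype.card_fin, mul_div_cancel₀ _ hn0]
    linarith
  have hLE := two_mul_sum_sub_le_sum_abs_sub htrace S
  rw [hScard] at hLE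
  have part1 : ∑ i, |μ i - (2 * (n : ℝ) - 2) / n| ≥
      2 * n + 2 * s - 2 - 2 * s * ((2 * (n : ℝ) - 2) / n) := by
    linarith
  refine ⟨part1, fun hcond => le_trans ?_ part1⟩
  have hgap : 2 * n + 2 * s - 2 - 2 * s * ((2 * (n : ℝ) - 2) / n) - (2 + 4 * n / π) =
      2 * ((π - 2) / π * n - (s + 2 - 2 * s / n)) := by
    field_simp
    ring
  linarith

theorem tree_energy_via_internal_vertices (n : ℕ) (hn : 4 ≤ n)
    (G : SimpleGraph (Fin n)) [DecidableRel G.Adj] (hT : G.IsTree)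
    (μ : Fin n → ℝ) (hmono : Antitone μ)
    (hchar : (G.lapMatrix ℝ).charpoly = ∏ i, (X - C (μ i)))
    (d : Fin n → ℕ) (hdmono : Antitone d)
    (hperm : ∃ e : Equiv.Perm (Fin n), ∀ i, d i = G.degree (e i))
    (s : ℕ) (hs : s = (Finset.univ.filter fun v : Fin n => 2 ≤ G.degree v).card)
    (hs1 : 1 ≤ s) (hs2 : s ≤ n - 2)
    (hGrone : (∑ i ∈ Finset.univ.filter fun i : Fin n => (i : ℕ) < s, μ i) ≥
      1 + ∑ i ∈ Finset.univ.filter fun i : Fin n => (i : ℕ) < s, (d i : ℝ)) :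
    ∑ i, |μ i - (2 * (n : ℝ) - 2) / n| ≥
        2 * n + 2 * s - 2 - 2 * s * ((2 * (n : ℝ) - 2) / n) ∧
      (((Real.pi - 2) / Real.pi) * n ≥ s + 2 - 2 * s / n →
        ∑ i, |μ i - (2 * (n : ℝ) - 2) / n| ≥ 2 + 4 * n / Real.pi) :=
  tree_energy_via_internal_vertices_general n hn G hT μ hchar d hdmono hperm s hs hGrone
end

section
/- Fix integers a, b ≥ 1 and let n = 2(a+b) + 1. Define E = √5·(a+b−1) + √((a+b)² − 2(a+b) + 5) + 4(a+b)/n. Then for n ≥ 19, E > 2 + 4n/π. -/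
/-! With `s = a + b` and `n = 2s + 1`, the three terms of the energy are bounded below by
`(11/5)(s - 1)`, `s - 1` (as `s² - 2s + 5 = (s - 1)² + 4`) and `36/19` (as `4s/(2s + 1)` increases
in `s`), while `π > 3` bounds `4n/π` above by `(8s + 4)/3`; the resulting linear inequality holds
for `s ≥ 9`, i.e. `n ≥ 19`. -/

open Real

lemma sub_one_lt_sqrt_sq_sub_two_mul_add_five (s : ℝ) : s - 1 < √(s ^ 2 - 2 * s + 5) := by
  calc s - 1 ≤ |s - 1| := le_abs_self _
    _ = √((s - 1) ^ 2) := (sqrt_sq_eq_abs _).symm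
    _ < √(s ^ 2 - 2 * s + 5) := by
      apply sqrt_lt_sqrt (sq_nonneg _)
      linarith

lemma two_add_four_mul_div_pi_lt_of_nine_le {s : ℝ} (hs : 9 ≤ s) :
    2 + 4 * (2 * s + 1) / π < √5 * (s - 1) + √(s ^ 2 - 2 * s + 5) + 4 * s / (2 * s + 1) := by
  have hsqrt5 : 11 / 5 < √5 := by rw [lt_sqrt] <;> norm_num
  have hfrac : 36 / 19 ≤ 4 * s / (2 * s + 1) := by rw [le_div_iff₀ (by linarith)]; linarith
  have hpi : 4 * (2 * s + 1) / π < 4 * (2 * s + 1) / 3 :=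
    div_lt_div_of_pos_left (by linarith) (by norm_num) pi_gt_three
  nlinarith [sub_one_lt_sqrt_sq_sub_two_mul_add_five s,
    mul_le_mul_of_nonneg_right hsqrt5.le (by linarith : (0 : ℝ) ≤ s - 1)]

theorem energy_T4_gt_path_general (a b : ℕ) (n : ℕ)
    (hn : n = 2 * (a + b) + 1) (hn19 : 19 ≤ n) :
    Real.sqrt 5 * ((a : ℝ) + b - 1) +
        Real.sqrt (((a : ℝ) + b) ^ 2 - 2 * ((a : ℝ) + b) + 5) + 4 * ((a : ℝ) + b) / n >
      2 + 4 * n / Real.pi := by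
  have hs : (9 : ℝ) ≤ a + b := by exact_mod_cast (by omega : 9 ≤ a + b)
  have hn' : (n : ℝ) = 2 * ((a : ℝ) + b) + 1 := by rw [hn]; push_cast; ring
  rw [hn']
  exact two_add_four_mul_div_pi_lt_of_nine_le hs

theorem energy_T4_gt_path (a b : ℕ) (ha : 1 ≤ a) (hb : 1 ≤ b) (n : ℕ)
    (hn : n = 2 * (a + b) + 1) (hn19 : 19 ≤ n) :
    Real.sqrt 5 * ((a : ℝ) + b - 1) +
        Real.sqrt (((a : ℝ) + b) ^ 2 - 2 * ((a : ℝ) + b) + 5) + 4 * ((a : ℝ) + b) / n >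
      2 + 4 * n / Real.pi :=
  energy_T4_gt_path_general a b n hn hn19
end

section
/- Let G be a finite simple graph with p pendent vertices (vertices of degree 1) and q quasi-pendent vertices (vertices adjacent to at least one pendent vertex). Then 1 is a Laplacian eigenvalue of G with multiplicity at least p − q. -/
/-!
Two pendent vertices `u, v` with a common neighbour `w` both have neighbourhood `{w}`, so
`e_u - e_v` is an eigenvector of the Laplacian for the eigenvalue `deg u = 1`. Grouping the `p`
pendent vertices by their neighbourhood gives at most `q` groups; pairing every vertex of a group
with a fixed representative of it yields at least `p - q` such eigenvectors, linearly independent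
because each is the only one that is nonzero at its own non-representative vertex. Finally the
geometric multiplicity of an eigenvalue is at most its algebraic multiplicity.
-/

open Finset Matrix

theorem Finset.exists_card_add_card_image_eq {α β : Type*} [DecidableEq α] [DecidableEq β]
    (P : Finset α) (f : α → β) :
    ∃ S ⊆ P, ∃ ρ : α → α, (∀ u ∈ S, ρ u ∈ P \ S ∧ f (ρ u) = f u) ∧ #S + #(P.image f) = #P := by
  obtain hα | hα := isEmpty_or_nonempty α
  · exact ⟨∅, empty_subset P, id, by simp, by simp [eq_empty_of_isEmpty P]⟩
  have hsection : ∀ w ∈ P.image f, ∃ u ∈ P, f u = w := fun w => mem_image.mp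
  choose! r hrP hrf using hsection
  have hr : ∀ u ∈ P, r (f u) ∈ P ∧ f (r (f u)) = f u := fun u hu =>
    ⟨hrP _ (mem_image_of_mem f hu), hrf _ (mem_image_of_mem f hu)⟩
  refine ⟨P.filter fun u => r (f u) ≠ u, filter_subset _ _, r ∘ f, fun u hu => ?_, ?_⟩
  · obtain ⟨hrfu, hfrfu⟩ := hr u (mem_filter.mp hu).1
    exact ⟨mem_sdiff.mpr ⟨hrfu, fun h => (mem_filter.mp h).2 (by rw [Function.comp_apply, hfrfu])⟩,
      hfrfu⟩
  · have hfix : #(P.filter fun u => r (f u) = u) = #(P.image f) :=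
      card_nbij' f r (fun u hu => mem_image_of_mem f (mem_filter.mp hu).1)
        (fun w hw => mem_filter.mpr ⟨hrP w hw, by rw [hrf w hw]⟩)
        (fun u hu => (mem_filter.mp hu).2) (fun w hw => hrf w hw)
    rw [← hfix, add_comm, card_filter_add_card_filter_not]

theorem Pi.linearIndependent_single_one_sub_single_one {ι R : Type*} [DecidableEq ι] [Ring R]
    (S : Finset ι) {ρ : ι → ι} (hρ : ∀ u ∈ S, ρ u ∉ S) :
    LinearIndependent R fun u : S => (Pi.single (u : ι) (1 : R) - Pi.single (ρ u) 1 : ι → R) := by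
  apply LinearIndependent.of_comp (LinearMap.funLeft R R ((↑) : S → ι))
  convert (Pi.basisFun R S).linearIndependent using 1
  funext u w
  have hρw : ρ u ≠ w := fun h => hρ u u.2 (h ▸ w.2)
  simp only [Function.comp_apply, LinearMap.funLeft_apply, Pi.basisFun_apply, Pi.sub_apply]
  rw [Pi.single_eq_of_ne hρw.symm, sub_zero]
  simp only [Pi.single_apply, Subtype.ext_iff]

namespace SimpleGraph

variable {V : Type*} [Fintype V] (G : SimpleGraph V) [DecidableRel G.Adj]

theorem adjMatrix_col_eq_of_neighborFinset_eq {R : Type*} [NonAssocSemiring R] {u v : V}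
    (h : G.neighborFinset u = G.neighborFinset v) :
    (G.adjMatrix R).col u = (G.adjMatrix R).col v := by
  ext w
  have hw : ∀ x, G.Adj w x ↔ w ∈ G.neighborFinset x := fun x => by
    rw [mem_neighborFinset, adj_comm]
  simp only [col_apply, adjMatrix_apply]
  exact if_congr (by rw [hw, hw, h]) rfl rfl

variable [DecidableEq V]

theorem lapMatrix_mulVec_single_sub_single {R : Type*} [NonAssocRing R] {u v : V}
    (h : G.neighborFinset u = G.neighborFinset v) :
    G.lapMatrix R *ᵥ (Pi.single u 1 - Pi.single v 1) =
      (G.degree u : R) • (Pi.single u 1 - Pi.single v 1) := by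
  have hdeg : G.degree u = G.degree v := by
    rw [← card_neighborFinset_eq_degree, h, card_neighborFinset_eq_degree]
  rw [lapMatrix, sub_mulVec, mulVec_sub, mulVec_sub, mulVec_single_one (G.adjMatrix R),
    mulVec_single_one (G.adjMatrix R), adjMatrix_col_eq_of_neighborFinset_eq G h, sub_self,
    sub_zero, degMatrix, diagonal_mulVec_single, diagonal_mulVec_single, smul_sub, hdeg]
  ext w
  simp [Pi.single_apply]

theorem card_image_neighborFinset_pendant_le :
    #((univ.filter fun v => G.degree v = 1).image fun v => G.neighborFinset v) ≤
      #(univ.filter fun v => ∃ u, G.Adj v u ∧ G.degree u = 1) := by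
  refine (card_le_card fun s hs => ?_).trans (card_image_le (f := fun w => ({w} : Finset V)))
  obtain ⟨u, hu, rfl⟩ := mem_image.mp hs
  have hdeg := (mem_filter.mp hu).2
  obtain ⟨w, hw⟩ := card_eq_one.mp ((G.card_neighborFinset_eq_degree u).trans hdeg)
  refine mem_image.mpr ⟨w, mem_filter.mpr ⟨mem_univ w, u, ?_, hdeg⟩, hw.symm⟩
  rw [adj_comm, ← mem_neighborFinset, hw]
  exact mem_singleton_self w

theorem card_pendant_sub_card_quasiPendant_le_finrank_eigenspace_one {K : Type*} [Field K] :
    #(univ.filter fun v => G.degree v = 1) -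
        #(univ.filter fun v => ∃ u, G.Adj v u ∧ G.degree u = 1) ≤
      Module.finrank K (Module.End.eigenspace (toLin' (G.lapMatrix K)) 1) := by
  obtain ⟨S, hSP, ρ, hρ, hcard⟩ :=
    (univ.filter fun v => G.degree v = 1).exists_card_add_card_image_eq fun v => G.neighborFinset v
  have hli := Pi.linearIndependent_single_one_sub_single_one (R := K) S
    fun u hu => (mem_sdiff.mp (hρ u hu).1).2
  have hmem : ∀ u ∈ S, (Pi.single u 1 - Pi.single (ρ u) 1 : V → K) ∈
      Module.End.eigenspace (toLin' (G.lapMatrix K)) 1 := fun u hu => by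
    rw [Module.End.mem_eigenspace_iff, toLin'_apply,
      G.lapMatrix_mulVec_single_sub_single (hρ u hu).2.symm, (mem_filter.mp (hSP hu)).2,
      Nat.cast_one]
  calc _ ≤ #S := by have := G.card_image_neighborFinset_pendant_le; omega
    _ = Module.finrank K (Submodule.span K (Set.range fun u : S =>
          (Pi.single (u : V) (1 : K) - Pi.single (ρ u) 1 : V → K))) := by
      rw [finrank_span_eq_card hli, Fintype.card_coe]
    _ ≤ _ := Submodule.finrank_mono <| Submodule.span_le.mpr <| Set.range_subset_iff.mpr
          fun u => hmem u u.2

end SimpleGraph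

theorem laplacian_eigenvalue_one_multiplicity (n : ℕ)
    (G : SimpleGraph (Fin n)) [DecidableRel G.Adj]
    (p q : ℕ)
    (hp : p = (Finset.univ.filter fun v : Fin n => G.degree v = 1).card)
    (hq : q = (Finset.univ.filter fun v : Fin n =>
        ∃ u, G.Adj v u ∧ G.degree u = 1).card) :
    p - q ≤ (G.lapMatrix ℝ).charpoly.rootMultiplicity 1 := by
  subst hp hq
  calc _ ≤ Module.finrank ℝ (Module.End.eigenspace (toLin' (G.lapMatrix ℝ)) 1) := by
        -- the statement decides `∃ u : Fin n, _` by `Nat.decidableExistsFin`, not the generic instance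
        convert G.card_pendant_sub_card_quasiPendant_le_finrank_eigenspace_one (K := ℝ)
    _ ≤ (toLin' (G.lapMatrix ℝ)).charpoly.rootMultiplicity 1 := LinearMap.finrank_eigenspace_le _ _
    _ = _ := by rw [charpoly_toLin']
end
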